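/- arXiv:1503.03922 — 2 statements merged into one kernel-verified Lean document; each statement's English description precedes it below -/
import Mathlib

section
/- Integral bounds and intermediate points in Lagrangian coordinates (Lemma 2.4). Let Y:[0,T]→[0,∞) be nondecreasing with Y(0)=0, and for 0≤t≤T and integer i ≥ [Y(t)]+1 set Ω_i(t)=[Y(t),[Y(t)]+2] if i=[Y(t)]+1 and Ω_i(t)=[i,i+1] if i≥[Y(t)]+2 ([·] is the integer part). Let v,θ be positive measurable functions on {(t,y):0≤t≤T, y>Y(t)}, let ṽ,θ̃ be functions with 0<c₁≤ṽ,θ̃≤c₂, and assume the energy bound sup_{0≤s≤T} ∫_{Y(s)}^{∞} [Φ(v(s,y)/ṽ(y)) + Φ(θ(s,y)/θ̃(y))] dy ≤ E₀ for some E₀>0. Then there exists a constant C₀>0, depending only on c₁, c₂ and E₀, such that for every pair (s,t) with 0≤s≤t≤T and every integer i ≥ [Y(t)]+1: C₀^{−1} ≤ ∫_{Ω_i(t)} v(s,y) dy and ∫_{Ω_i(t)} θ(s,y) dy ≤ C₀, as well as C₀^{−1} ≤ ∫_{Ω_i(t)} θ(s,y) dy and ∫_{Ω_i(t)} v(s,y)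 dy ≤ C₀; moreover, if v(s,·) and θ(s,·) are continuous, there exist points a_i(s,t), b_i(s,t) ∈ Ω_i(t) with C₀^{−1} ≤ v(s,a_i(s,t)) ≤ C₀ and C₀^{−1} ≤ θ(s,b_i(s,t)) ≤ C₀. -/
/-!
Two elementary bounds make the pointwise values affine in `Φ`: `z ≤ 2 (Φ z + 1)` because
`log z ≤ z / 2`, and `e^{-(K+1)} (1 - Φ z / K) ≤ z` because `Φ z ≥ -log z - 1`. Integrating
them over an interval of length between 1 and 2 lying to the right of `Y(s)`, where the energy
bound controls `∫ Φ` by `E₀`, gives both integral bounds (the choice `K = 2E₀` keeps half of the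
interval's length in the lower bound). The points `a_i`, `b_i` come from the mean value theorem
for integrals.
-/

open MeasureTheory Set Filter Real

noncomputable def Φ (z : ℝ) : ℝ := z - log z - 1

lemma Φ_nonneg {z : ℝ} (hz : 0 < z) : 0 ≤ Φ z := by
  have := log_le_sub_one_of_pos hz
  unfold Φ; linarith

lemma le_two_mul_Φ_add_one {z : ℝ} (hz : 0 < z) : z ≤ 2 * (Φ z + 1) := by
  have hz2 : log (z / 2) ≤ z / 2 - 1 := log_le_sub_one_of_pos (by positivity)
  have h2 : log 2 ≤ 1 := by linarith [log_le_sub_one_of_pos (zero_lt_two' ℝ)]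
  rw [log_div hz.ne' two_ne_zero] at hz2
  unfold Φ; linarith

lemma exp_mul_one_sub_Φ_div_le {z K : ℝ} (hz : 0 < z) (hK : 0 < K) :
    exp (-(K + 1)) * (1 - Φ z / K) ≤ z := by
  rcases le_or_gt K (Φ z) with hΦ | hΦ
  · have : 1 - Φ z / K ≤ 0 := by rw [sub_nonpos, one_le_div hK]; exact hΦ
    nlinarith [exp_pos (-(K + 1))]
  · have hlog : -(K + 1) < log z := by unfold Φ at hΦ; linarith [log_le_sub_one_of_pos hz]
    have : exp (-(K + 1)) < z := by rwa [lt_log_iff_exp_lt hz] at hlog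
    have : 0 ≤ Φ z / K := div_nonneg (Φ_nonneg hz) hK.le
    nlinarith [exp_pos (-(K + 1))]

lemma bounds_of_Φ_div {w wS c₁ c₂ K : ℝ} (hw : 0 < w) (hc₁ : 0 < c₁) (h₁ : c₁ ≤ wS)
    (h₂ : wS ≤ c₂) (hK : 0 < K) :
    c₁ * exp (-(K + 1)) * (1 - Φ (w / wS) / K) ≤ w ∧ w ≤ 2 * c₂ * (Φ (w / wS) + 1) := by
  have hwS : 0 < wS := hc₁.trans_le h₁
  have hz : 0 < w / wS := div_pos hw hwS
  have hw_eq : w = wS * (w / wS) := by field_simp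
  constructor
  · calc c₁ * exp (-(K + 1)) * (1 - Φ (w / wS) / K)
        = c₁ * (exp (-(K + 1)) * (1 - Φ (w / wS) / K)) := by ring
      _ ≤ c₁ * (w / wS) := mul_le_mul_of_nonneg_left (exp_mul_one_sub_Φ_div_le hz hK) hc₁.le
      _ ≤ wS * (w / wS) := mul_le_mul_of_nonneg_right h₁ hz.le
      _ = w := hw_eq.symm
  · calc w = wS * (w / wS) := hw_eq
      _ ≤ c₂ * (2 * (Φ (w / wS) + 1)) :=
        mul_le_mul h₂ (le_two_mul_Φ_add_one hz) hz.le (hwS.le.trans h₂)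
      _ = 2 * c₂ * (Φ (w / wS) + 1) := by ring

lemma setIntegral_bounds_of_ae_bounds {α : Type*} [MeasurableSpace α] {μ : Measure α}
    {S : Set α} (hS : μ S ≠ ⊤) {g F : α → ℝ} {a K A : ℝ}
    (hg : IntegrableOn g S μ) (hF : IntegrableOn F S μ)
    (h : ∀ᵐ x ∂μ.restrict S, a * (1 - F x / K) ≤ g x ∧ g x ≤ A * (F x + 1)) :
    a * (μ.real S - (∫ x in S, F x ∂μ) / K) ≤ ∫ x in S, g x ∂μ ∧
      ∫ x in S, g x ∂μ ≤ A * (∫ x in S, F x ∂μ + μ.real S) := by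
  have hc : ∀ c : ℝ, IntegrableOn (fun _ ↦ c) S μ := fun c ↦ integrableOn_const hS
  constructor
  · have hlow : IntegrableOn (fun x ↦ a * (1 - F x / K)) S μ :=
      ((hc 1).sub (hF.div_const K)).const_mul a
    have := integral_mono_ae hlow hg (h.mono fun _ hx ↦ hx.1)
    rwa [integral_const_mul, integral_sub (hc 1) (hF.div_const K), integral_div,
      setIntegral_const, smul_eq_mul, mul_one] at this
  · have hup : IntegrableOn (fun x ↦ A * (F x + 1)) S μ := (hF.add (hc 1)).const_mul A
    have := integral_mono_ae hg hup (h.mono fun _ hx ↦ hx.2)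
    rwa [integral_const_mul, integral_add hF (hc 1), setIntegral_const, smul_eq_mul,
      mul_one] at this

lemma exists_mem_Icc_bounds_of_setIntegral_bounds {g : ℝ → ℝ} {p q m M : ℝ}
    (h₁ : 1 ≤ q - p) (h₂ : q - p ≤ 2) (hg : ContinuousOn g (Icc p q)) (hm : 0 ≤ m)
    (hlow : m ≤ ∫ x in Icc p q, g x) (hup : ∫ x in Icc p q, g x ≤ M) :
    ∃ a ∈ Icc p q, m / 2 ≤ g a ∧ g a ≤ M := by
  have hpq : p ≤ q := by linarith
  have hvol : volume.real (Icc p q) = q - p := Real.volume_real_Icc_of_le hpq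
  obtain ⟨a, ha, hga⟩ := exists_eq_setAverage (μ := volume) (isConnected_Icc hpq) hg
    hg.integrableOn_Icc (by simp) (by simp; linarith)
  rw [setAverage_eq, hvol, smul_eq_mul, ← div_eq_inv_mul] at hga
  refine ⟨a, ha, ?_, ?_⟩ <;> rw [hga]
  · rw [le_div_iff₀ (by linarith)]; nlinarith
  · rw [div_le_iff₀ (by linarith)]; nlinarith

lemma Icc_ae_le_Ioi {y p q : ℝ} (hyp : y ≤ p) : Icc p q ≤ᵐ[volume] Ioi y :=
  (LE.le.eventuallyLE fun _ hx ↦ hyp.trans hx.1).trans Ioi_ae_eq_Ici.symm.le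

lemma setIntegral_Icc_le_setIntegral_Ioi {f : ℝ → ℝ} {y p q : ℝ} (hyp : y ≤ p)
    (hf : IntegrableOn f (Ioi y)) (hf₀ : ∀ x, y < x → 0 ≤ f x) :
    ∫ x in Icc p q, f x ≤ ∫ x in Ioi y, f x :=
  setIntegral_mono_set hf ((ae_restrict_iff' measurableSet_Ioi).2 (ae_of_all _ hf₀))
    (Icc_ae_le_Ioi hyp)

lemma ae_restrict_Icc_lt {y p q : ℝ} (hyp : y ≤ p) : ∀ᵐ x ∂volume.restrict (Icc p q), y < x :=
  ae_restrict_of_ae_restrict_of_subset (fun _ hx ↦ hyp.trans hx.1)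
    ((ae_restrict_congr_set Ioi_ae_eq_Ici).1 (ae_restrict_mem measurableSet_Ioi))

lemma exists_Icc_eq_ite_Icc_floor {y : ℝ} {i : ℤ} (hi : ⌊y⌋ + 1 ≤ i) :
    ∃ p q : ℝ, (if i = ⌊y⌋ + 1 then Icc y ((⌊y⌋ : ℝ) + 2) else Icc (i : ℝ) ((i : ℝ) + 1))
      = Icc p q ∧ y ≤ p ∧ 1 ≤ q - p ∧ q - p ≤ 2 := by
  have h₁ := Int.floor_le y
  have h₂ := Int.lt_floor_add_one y
  split_ifs with hi'
  · exact ⟨y, ⌊y⌋ + 2, rfl, le_rfl, by linarith, by linarith⟩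
  · have : (⌊y⌋ : ℝ) + 2 ≤ i := by exact_mod_cast (by omega : ⌊y⌋ + 2 ≤ i)
    exact ⟨i, i + 1, rfl, by linarith, by linarith, by linarith⟩

lemma setIntegral_bounds_of_energy {g gS F : ℝ → ℝ} {c₁ c₂ E₀ p q : ℝ}
    (hc₁ : 0 < c₁) (hc₁₂ : c₁ ≤ c₂) (hE₀ : 0 < E₀) (h₁ : 1 ≤ q - p) (h₂ : q - p ≤ 2)
    (hg : IntegrableOn g (Icc p q)) (hF : IntegrableOn F (Icc p q))
    (hFE : ∫ x in Icc p q, F x ≤ E₀)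
    (hgF : ∀ᵐ x ∂volume.restrict (Icc p q),
      0 < g x ∧ c₁ ≤ gS x ∧ gS x ≤ c₂ ∧ Φ (g x / gS x) ≤ F x) :
    c₁ * exp (-(2 * E₀ + 1)) / 2 ≤ ∫ x in Icc p q, g x ∧
      ∫ x in Icc p q, g x ≤ 2 * c₂ * (E₀ + 2) := by
  set δ := c₁ * exp (-(2 * E₀ + 1))
  have hδ : 0 < δ := by positivity
  have hc₂ : 0 ≤ c₂ := hc₁.le.trans hc₁₂
  have hK : 0 < 2 * E₀ := by positivity
  have hae : ∀ᵐ x ∂volume.restrict (Icc p q),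
      δ * (1 - F x / (2 * E₀)) ≤ g x ∧ g x ≤ 2 * c₂ * (F x + 1) := by
    filter_upwards [hgF] with x ⟨hgx, hS₁, hS₂, hΦF⟩
    obtain ⟨hlow, hup⟩ := bounds_of_Φ_div hgx hc₁ hS₁ hS₂ hK
    constructor
    · refine le_trans ?_ hlow
      gcongr
    · refine hup.trans ?_
      gcongr
  obtain ⟨hlow, hup⟩ := setIntegral_bounds_of_ae_bounds (by simp) hg hF hae
  rw [Real.volume_real_Icc_of_le (by linarith)] at hlow hup
  have hFK : (∫ x in Icc p q, F x) / (2 * E₀) ≤ 1 / 2 := by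
    rw [div_le_iff₀ hK]; linarith
  constructor
  · nlinarith
  · nlinarith

noncomputable def intervalBoundConst (c₁ c₂ E₀ : ℝ) : ℝ :=
  max (2 * c₂ * (E₀ + 2)) (4 / (c₁ * exp (-(2 * E₀ + 1))))

lemma intervalBoundConst_pos {c₁ c₂ E₀ : ℝ} (hc₁ : 0 < c₁) :
    0 < intervalBoundConst c₁ c₂ E₀ :=
  lt_max_of_lt_right (by positivity)

lemma inv_intervalBoundConst_le {c₁ c₂ E₀ : ℝ} (hc₁ : 0 < c₁) :
    (intervalBoundConst c₁ c₂ E₀)⁻¹ ≤ c₁ * exp (-(2 * E₀ + 1)) / 4 := by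
  calc (intervalBoundConst c₁ c₂ E₀)⁻¹ ≤ (4 / (c₁ * exp (-(2 * E₀ + 1))))⁻¹ :=
        inv_anti₀ (by positivity) (le_max_right _ _)
    _ = c₁ * exp (-(2 * E₀ + 1)) / 4 := by rw [inv_div]

lemma bounds_of_energy {g gS F : ℝ → ℝ} {c₁ c₂ E₀ p q : ℝ}
    (hc₁ : 0 < c₁) (hc₁₂ : c₁ ≤ c₂) (hE₀ : 0 < E₀) (h₁ : 1 ≤ q - p) (h₂ : q - p ≤ 2)
    (hg : IntegrableOn g (Icc p q)) (hF : IntegrableOn F (Icc p q))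
    (hFE : ∫ x in Icc p q, F x ≤ E₀)
    (hgF : ∀ᵐ x ∂volume.restrict (Icc p q),
      0 < g x ∧ c₁ ≤ gS x ∧ gS x ≤ c₂ ∧ Φ (g x / gS x) ≤ F x) :
    (intervalBoundConst c₁ c₂ E₀)⁻¹ ≤ ∫ x in Icc p q, g x ∧
      ∫ x in Icc p q, g x ≤ intervalBoundConst c₁ c₂ E₀ ∧
      (ContinuousOn g (Icc p q) → ∃ a ∈ Icc p q,
        (intervalBoundConst c₁ c₂ E₀)⁻¹ ≤ g a ∧ g a ≤ intervalBoundConst c₁ c₂ E₀) := by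
  obtain ⟨hlow, hup⟩ := setIntegral_bounds_of_energy hc₁ hc₁₂ hE₀ h₁ h₂ hg hF hFE hgF
  have hCinv := inv_intervalBoundConst_le (c₂ := c₂) (E₀ := E₀) hc₁
  have hC : 2 * c₂ * (E₀ + 2) ≤ intervalBoundConst c₁ c₂ E₀ := le_max_left _ _
  have hδ : 0 ≤ c₁ * exp (-(2 * E₀ + 1)) / 2 := by positivity
  refine ⟨by linarith, hup.trans hC, fun hcont ↦ ?_⟩
  obtain ⟨a, ha, hga₁, hga₂⟩ :=
    exists_mem_Icc_bounds_of_setIntegral_bounds h₁ h₂ hcont hδ hlow hup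
  exact ⟨a, ha, by linarith, hga₂.trans hC⟩

/-- Integral bounds and intermediate points in Lagrangian coordinates (Lemma 2.4). -/
theorem stmt_5 (c₁ c₂ E₀ : ℝ) (hc₁ : 0 < c₁) (hc₁₂ : c₁ ≤ c₂) (hE₀ : 0 < E₀) :
    ∃ C₀ : ℝ, 0 < C₀ ∧
      ∀ (T : ℝ) (Y : ℝ → ℝ) (v θ : ℝ → ℝ → ℝ) (vS θS : ℝ → ℝ),
        0 ≤ T →
        MonotoneOn Y (Set.Icc 0 T) → Y 0 = 0 → (∀ t ∈ Set.Icc (0:ℝ) T, 0 ≤ Y t) →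
        -- v and θ are positive and measurable on the domain {(t,y) : 0 ≤ t ≤ T, y > Y(t)}
        (∀ t ∈ Set.Icc (0:ℝ) T, ∀ y, Y t < y → 0 < v t y ∧ 0 < θ t y) →
        (∀ t ∈ Set.Icc (0:ℝ) T, Measurable (v t) ∧ Measurable (θ t)) →
        -- local integrability
        (∀ s ∈ Set.Icc (0:ℝ) T, ∀ a b : ℝ,
          IntegrableOn (v s) (Set.Icc a b) ∧ IntegrableOn (θ s) (Set.Icc a b)) →
        -- bounds on the reference profiles
        (∀ y : ℝ, c₁ ≤ vS y ∧ vS y ≤ c₂ ∧ c₁ ≤ θS y ∧ θS y ≤ c₂) →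
        -- the energy bound
        (∀ s ∈ Set.Icc (0:ℝ) T,
          IntegrableOn (fun y => (v s y / vS y - Real.log (v s y / vS y) - 1)
            + (θ s y / θS y - Real.log (θ s y / θS y) - 1)) (Set.Ioi (Y s))) →
        (∀ s ∈ Set.Icc (0:ℝ) T,
          (∫ y in Set.Ioi (Y s), ((v s y / vS y - Real.log (v s y / vS y) - 1)
            + (θ s y / θS y - Real.log (θ s y / θS y) - 1))) ≤ E₀) →
        -- conclusion
        ∀ s t : ℝ, 0 ≤ s → s ≤ t → t ≤ T →
          ∀ i : ℤ, ⌊Y t⌋ + 1 ≤ i →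
            ∀ Ω : Set ℝ,
              Ω = (if i = ⌊Y t⌋ + 1 then Set.Icc (Y t) ((⌊Y t⌋ : ℝ) + 2)
                    else Set.Icc (i : ℝ) ((i : ℝ) + 1)) →
              (C₀⁻¹ ≤ ∫ y in Ω, v s y) ∧ (∫ y in Ω, v s y) ≤ C₀ ∧
              (C₀⁻¹ ≤ ∫ y in Ω, θ s y) ∧ (∫ y in Ω, θ s y) ≤ C₀ ∧
              (ContinuousOn (v s) Ω → ∃ a ∈ Ω, C₀⁻¹ ≤ v s a ∧ v s a ≤ C₀) ∧
              (ContinuousOn (θ s) Ω → ∃ b ∈ Ω, C₀⁻¹ ≤ θ s b ∧ θ s b ≤ C₀) := by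
  refine ⟨intervalBoundConst c₁ c₂ E₀, intervalBoundConst_pos hc₁, ?_⟩
  intro T Y v θ vS θS _ hY _ _ hpos _ hloc hS hFint hFE s t hs hst htT i hi Ω hΩ
  have hsT : s ∈ Icc 0 T := ⟨hs, hst.trans htT⟩
  obtain ⟨p, q, hpq, hYp, h₁, h₂⟩ := exists_Icc_eq_ite_Icc_floor hi
  have hYsp : Y s ≤ p := (hY hsT ⟨hs.trans hst, htT⟩ hst).trans hYp
  subst hΩ
  rw [hpq]
  set F : ℝ → ℝ := fun y ↦ Φ (v s y / vS y) + Φ (θ s y / θS y)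
  have hF₀ : ∀ y, Y s < y → 0 ≤ Φ (v s y / vS y) ∧ 0 ≤ Φ (θ s y / θS y) := fun y hy ↦
    ⟨Φ_nonneg (div_pos (hpos s hsT y hy).1 (hc₁.trans_le (hS y).1)),
      Φ_nonneg (div_pos (hpos s hsT y hy).2 (hc₁.trans_le (hS y).2.2.1))⟩
  have hFE' : ∫ y in Icc p q, F y ≤ E₀ :=
    (setIntegral_Icc_le_setIntegral_Ioi hYsp (hFint s hsT)
      fun y hy ↦ add_nonneg (hF₀ y hy).1 (hF₀ y hy).2).trans (hFE s hsT)
  have hFint' : IntegrableOn F (Icc p q) :=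
    (hFint s hsT).mono_set_ae (Icc_ae_le_Ioi hYsp)
  obtain ⟨hv₁, hv₂, hv₃⟩ := bounds_of_energy (gS := vS) hc₁ hc₁₂ hE₀ h₁ h₂ (hloc s hsT p q).1
    hFint' hFE' <| by
      filter_upwards [ae_restrict_Icc_lt hYsp] with y hy
      exact ⟨(hpos s hsT y hy).1, (hS y).1, (hS y).2.1, le_add_of_nonneg_right (hF₀ y hy).2⟩
  obtain ⟨hθ₁, hθ₂, hθ₃⟩ := bounds_of_energy (gS := θS) hc₁ hc₁₂ hE₀ h₁ h₂ (hloc s hsT p q).2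
    hFint' hFE' <| by
      filter_upwards [ae_restrict_Icc_lt hYsp] with y hy
      exact ⟨(hpos s hsT y hy).2, (hS y).2.2.1, (hS y).2.2.2,
        le_add_of_nonneg_left (hF₀ y hy).1⟩
  exact ⟨hv₁, hv₂, hθ₁, hθ₂, hv₃, hθ₃⟩
end

section
/- Upper bound for Φ and the squared logarithm (first inequality in (2.11)). There exists a constant C>0 such that for all real z>0: Φ(z) + (ln z)² ≤ C·(z^{−1} + 1)²·(z−1)², where Φ(z) = z − ln z − 1. -/
open Real

/-- Upper bound for Φ(z) = z - log z - 1 and (log z)²  (first inequality in (2.11)). -/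
theorem stmt_13 :
    ∃ C : ℝ, 0 < C ∧ ∀ z : ℝ, 0 < z →
      (z - Real.log z - 1) + (Real.log z) ^ 2 ≤ C * (z⁻¹ + 1) ^ 2 * (z - 1) ^ 2 := by
  refine ⟨2, by norm_num, fun z hz => ?_⟩
  have h1 : Real.log z ≤ z - 1 := Real.log_le_sub_one_of_pos hz
  have h2 : Real.log z⁻¹ ≤ z⁻¹ - 1 := Real.log_le_sub_one_of_pos (by positivity)
  rw [Real.log_inv] at h2
  have h3 : 1 - z⁻¹ ≤ Real.log z := by linarith
  have hmul : z * z⁻¹ = 1 := mul_inv_cancel₀ (ne_of_gt hz)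
  have hkey : (Real.log z - (z - 1)) * (Real.log z - (1 - z⁻¹)) ≤ 0 :=
    mul_nonpos_of_nonpos_of_nonneg (by linarith) (by linarith)
  nlinarith [sq_nonneg (z - 1), sq_nonneg (z⁻¹ * (z-1)), sq_nonneg ((z-1)*(z⁻¹+1)), inv_pos.mpr hz, sq_nonneg (z⁻¹)]
end
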